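/- Let r, m, s be positive integers, (m_{ij}) integers with ⟨D_j,d⟩ := Σ_i m_{ij} d_i for d ∈ ℕ^r, and let ρ_1,…,ρ_s, ρ_{0,1}, ρ_{0,2}, ρ_{s+1} : ℕ^r → ℕ be ℤ-linear forms nonnegative on ℕ^r; write ρ_0 := ρ_{0,1} + ρ_{0,2} (as a linear form) and correspondingly in the algebra below. Let A be a commutative ℚ-algebra with distinguished elements 𝐃_1,…,𝐃_m, ρ_1,…,ρ_s, ρ_{0,1}, ρ_{0,2}, ρ_{s+1} and p_0 = ρ_{0,2}, such that 𝐃_j + k and p_0 + k are invertible in A for every nonzero integer k (e.g. all distinguished elements nilpotent), and set ρ_0 := ρ_{0,1} + ρ_{0,2} ∈ A. For d ∈ ℕ^r define R_j(d) ∈ A by R_j(d) := (Π_{k=1}^{⟨𝐃_j,d⟩}(𝐃_j+k))^{-1} if ⟨𝐃_j,d⟩ ≥ 0, and R_j(d) := Π_{k=⟨𝐃_j,d⟩+1}^{0}(𝐃_j+k) if ⟨𝐃_j,d⟩ < 0. Define the coefficients (I-functions with exponential prefactors removed): Ī^{X}_d := (Π_j R_j(d))·(Π_{l=1}^s Π_{k=1}^{⟨ρ_l,d⟩}(ρ_l+k))·(Π_{k=1}^{⟨ρ_0,d⟩}(ρ_0+k))·(Π_{k=1}^{⟨ρ_{s+1},d⟩}(ρ_{s+1}+k));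 Ī^{D0}_d := (Π_j R_j(d))·(Π_{l=1}^s Π_{k=1}^{⟨ρ_l,d⟩}(ρ_l+k))·(Π_{k=1}^{⟨ρ_{0,1},d⟩}(ρ_{0,1}+k))·(Π_{k=1}^{⟨ρ_{0,2},d⟩}(ρ_{0,2}+k))·(Π_{k=1}^{⟨ρ_{s+1},d⟩}(ρ_{s+1}+k)); Ī^{X1}_d := Ī^{D0}_d (placed in y-degree −⟨ρ_{0,2},d⟩); and for d0 ≥ 0, Ī^{X̃2}_{d,d0} := (Π_j R_j(d))·(Π_{l=1}^s Π_{k=1}^{⟨ρ_l,d⟩}(ρ_l+k))·(Π_{k=1}^{⟨ρ_{0,1},d⟩+d0}(ρ_{0,1}+p_0+k))·(Π_{k=1}^{⟨ρ_{0,2},d⟩}(ρ_{0,2}+k))·(Π_{k=1}^{d0}(p_0+k))^{-1}·(Π_{k=1}^{⟨ρ_{s+1},d⟩}(ρ_{s+1}+k)) (placed in y-degree d0). Then Ī^{X}(q) ⋆_q Ī^{D0}(q) = (1/2πi)∮ Ī^{X1}(q,y) ⋆_q Ī^{X̃2}(q,y) dy/y; equivalently, for every d ∈ ℕ^r: Ī^{X}_d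 · Ī^{D0}_d = Ī^{X1}_d · Ī^{X̃2}_{d,⟨ρ_{0,2},d⟩} in A. -/

import Mathlib

/-! With `p0 = ρ02` and `ρ0 = ρ01 + ρ02`, the `X̃2` coefficient at `d0 = ⟨ρ02, d⟩` is the `X`
coefficient times `Π_{k=1}^{d0} (ρ02 + k)` times the inverse of that same product, which is a
unit; so both sides equal `Ī^X_d · Ī^{D0}_d`. -/

theorem isUnit_prod_Icc_add_natCast {A : Type*} [CommRing A] {x : A}
    (hx : ∀ k : ℤ, k ≠ 0 → IsUnit (x + (k : A))) (n : ℕ) :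
    IsUnit (∏ k ∈ Finset.Icc 1 n, (x + (k : A))) := by
  refine IsUnit.prod_iff.mpr fun k hk => ?_
  have hk0 : (k : ℤ) ≠ 0 := by
    have := (Finset.mem_Icc.mp hk).1
    omega
  simpa using hx k hk0

theorem stmt_9_general (r m s : ℕ)
    (c : Fin s → Fin r → ℕ) (c01 c02 cs1 : Fin r → ℕ)
    (A : Type*) [CommRing A]
    (ρ : Fin s → A) (ρ01 ρ02 ρs1 p0 ρ0 : A)
    (hp0 : p0 = ρ02) (hρ0 : ρ0 = ρ01 + ρ02)
    (hp : ∀ k : ℤ, k ≠ 0 → IsUnit (p0 + (k : A)))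
    (d : Fin r → ℕ)
    (R : Fin m → A) :
    ((∏ j, R j) *
        (∏ l, ∏ k ∈ Finset.Icc 1 (∑ i, c l i * d i), (ρ l + (k : A))) *
        (∏ k ∈ Finset.Icc 1 ((∑ i, c01 i * d i) + (∑ i, c02 i * d i)), (ρ0 + (k : A))) *
        (∏ k ∈ Finset.Icc 1 (∑ i, cs1 i * d i), (ρs1 + (k : A)))) *
      ((∏ j, R j) *
        (∏ l, ∏ k ∈ Finset.Icc 1 (∑ i, c l i * d i), (ρ l + (k : A))) *
        (∏ k ∈ Finset.Icc 1 (∑ i, c01 i * d i), (ρ01 + (k : A))) *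
        (∏ k ∈ Finset.Icc 1 (∑ i, c02 i * d i), (ρ02 + (k : A))) *
        (∏ k ∈ Finset.Icc 1 (∑ i, cs1 i * d i), (ρs1 + (k : A)))) =
    ((∏ j, R j) *
        (∏ l, ∏ k ∈ Finset.Icc 1 (∑ i, c l i * d i), (ρ l + (k : A))) *
        (∏ k ∈ Finset.Icc 1 (∑ i, c01 i * d i), (ρ01 + (k : A))) *
        (∏ k ∈ Finset.Icc 1 (∑ i, c02 i * d i), (ρ02 + (k : A))) *
        (∏ k ∈ Finset.Icc 1 (∑ i, cs1 i * d i), (ρs1 + (k : A)))) *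
      ((∏ j, R j) *
        (∏ l, ∏ k ∈ Finset.Icc 1 (∑ i, c l i * d i), (ρ l + (k : A))) *
        (∏ k ∈ Finset.Icc 1 ((∑ i, c01 i * d i) + (∑ i, c02 i * d i)),
          (ρ01 + p0 + (k : A))) *
        (∏ k ∈ Finset.Icc 1 (∑ i, c02 i * d i), (ρ02 + (k : A))) *
        Ring.inverse (∏ k ∈ Finset.Icc 1 (∑ i, c02 i * d i), (p0 + (k : A))) *
        (∏ k ∈ Finset.Icc 1 (∑ i, cs1 i * d i), (ρs1 + (k : A)))) := by
  subst hp0 hρ0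
  have hunit := isUnit_prod_Icc_add_natCast hp (∑ i, c02 i * d i)
  simp only [mul_assoc, Ring.mul_inverse_cancel_left _ _ hunit]
  ring

/-- General toric Hadamard product relation among the bases of solutions to the
Picard–Fuchs equations (Theorem 5.9 of the paper), stated coefficientwise in a
commutative ℚ-algebra `A`: for every multidegree `d`,
`Ī^X_d · Ī^{D0}_d = Ī^{X1}_d · Ī^{X̃2}_{d,⟨ρ_{0,2},d⟩}` with `Ī^{X1}_d = Ī^{D0}_d`.
The linear forms `⟨ρ_l, d⟩` are given by nonnegative coefficient vectors `c`,
the toric pairings `⟨𝐃_j, d⟩` by the integer matrix `M`, the factor `R j` is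
`Π_{k=-∞}^{0}(𝐃_j+k) / Π_{k=-∞}^{⟨𝐃_j,d⟩}(𝐃_j+k)`, and one sets `p0 = ρ02`,
`ρ0 = ρ01 + ρ02`. -/
theorem stmt_9 (r m s : ℕ) (hr : 0 < r) (hm : 0 < m) (hs : 0 < s)
    (M : Fin m → Fin r → ℤ)
    (c : Fin s → Fin r → ℕ) (c01 c02 cs1 : Fin r → ℕ)
    (A : Type*) [CommRing A] [Algebra ℚ A]
    (D : Fin m → A) (ρ : Fin s → A) (ρ01 ρ02 ρs1 p0 ρ0 : A)
    (hp0 : p0 = ρ02) (hρ0 : ρ0 = ρ01 + ρ02)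
    (hD : ∀ (j : Fin m) (k : ℤ), k ≠ 0 → IsUnit (D j + (k : A)))
    (hp : ∀ k : ℤ, k ≠ 0 → IsUnit (p0 + (k : A)))
    (d : Fin r → ℕ)
    (R : Fin m → A)
    (hR : ∀ j, R j =
      if 0 ≤ ∑ i, M j i * (d i : ℤ) then
        Ring.inverse (∏ k ∈ Finset.Icc (1 : ℕ) (∑ i, M j i * (d i : ℤ)).toNat,
          (D j + (k : A)))
      else ∏ k ∈ Finset.Icc ((∑ i, M j i * (d i : ℤ)) + 1) (0 : ℤ),
          (D j + (k : A))) :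
    ((∏ j, R j) *
        (∏ l, ∏ k ∈ Finset.Icc 1 (∑ i, c l i * d i), (ρ l + (k : A))) *
        (∏ k ∈ Finset.Icc 1 ((∑ i, c01 i * d i) + (∑ i, c02 i * d i)), (ρ0 + (k : A))) *
        (∏ k ∈ Finset.Icc 1 (∑ i, cs1 i * d i), (ρs1 + (k : A)))) *
      ((∏ j, R j) *
        (∏ l, ∏ k ∈ Finset.Icc 1 (∑ i, c l i * d i), (ρ l + (k : A))) *
        (∏ k ∈ Finset.Icc 1 (∑ i, c01 i * d i), (ρ01 + (k : A))) *
        (∏ k ∈ Finset.Icc 1 (∑ i, c02 i * d i), (ρ02 + (k : A))) *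
        (∏ k ∈ Finset.Icc 1 (∑ i, cs1 i * d i), (ρs1 + (k : A)))) =
    ((∏ j, R j) *
        (∏ l, ∏ k ∈ Finset.Icc 1 (∑ i, c l i * d i), (ρ l + (k : A))) *
        (∏ k ∈ Finset.Icc 1 (∑ i, c01 i * d i), (ρ01 + (k : A))) *
        (∏ k ∈ Finset.Icc 1 (∑ i, c02 i * d i), (ρ02 + (k : A))) *
        (∏ k ∈ Finset.Icc 1 (∑ i, cs1 i * d i), (ρs1 + (k : A)))) *
      ((∏ j, R j) *
        (∏ l, ∏ k ∈ Finset.Icc 1 (∑ i, c l i * d i), (ρ l + (k : A))) *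
        (∏ k ∈ Finset.Icc 1 ((∑ i, c01 i * d i) + (∑ i, c02 i * d i)),
          (ρ01 + p0 + (k : A))) *
        (∏ k ∈ Finset.Icc 1 (∑ i, c02 i * d i), (ρ02 + (k : A))) *
        Ring.inverse (∏ k ∈ Finset.Icc 1 (∑ i, c02 i * d i), (p0 + (k : A))) *
        (∏ k ∈ Finset.Icc 1 (∑ i, cs1 i * d i), (ρs1 + (k : A)))) :=
  stmt_9_general r m s c c01 c02 cs1 A ρ ρ01 ρ02 ρs1 p0 ρ0 hp0 hρ0 hp d R
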